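/- Let c : ℕ → ℍ and ε > 0 be such that for every x ∈ ℍ with |x| < ε the series f(x) = Σ_{n=0}^∞ P_n(x)·c_n converges. Then f is quaternionic intrinsic on the ball {|x| < ε} (i.e. f(x̄) = conj(f(x)) whenever |x| < ε) if and only if every coefficient c_n is a real number. -/

import Mathlib

open Quaternion

noncomputable section

/-- The coefficients `T^m_j = 2(m-j+1)/((m+1)(m+2))`. -/
def appellT (m j : ℕ) : ℝ :=
  (2 * ((m : ℝ) - (j : ℝ) + 1)) / (((m : ℝ) + 1) * ((m : ℝ) + 2))

/-- The `m`-th quaternionic Appell polynomial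
`Q_m(x) = Σ_{j=0}^m T^m_j x^{m-j} x̄^j`. -/
def appellQ (m : ℕ) (x : ℍ[ℝ]) : ℍ[ℝ] :=
  ∑ j ∈ Finset.range (m + 1), appellT m j • (x ^ (m - j) * (star x) ^ j)

/-- The normalizing constants `c_m = Σ_{j=0}^m (-1)^j T^m_j`. -/
def appellc (m : ℕ) : ℝ := ∑ j ∈ Finset.range (m + 1), (-1 : ℝ) ^ j * appellT m j

/-- The polynomials `P_m = Q_m / c_m`. -/
def appellP (m : ℕ) (x : ℍ[ℝ]) : ℍ[ℝ] := (appellc m)⁻¹ • appellQ m x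

/-!
Write `γ_n := appellc n` for the normalizing constant. On the real axis `x̄ = x`, and
`P_n(t) = tⁿ / γ_n` because the weights `T^n_j` sum to `1`; moreover
`γ_n = 2 (⌊n/2⌋ + 1) / ((n + 1)(n + 2)) > 0`. Restricted to real `t`, intrinsicness says that the
power series `Σ tⁿ γ_n⁻¹ c_n` and `Σ tⁿ γ_n⁻¹ c̄_n` have the same sum near `0`, so by uniqueness
of power-series coefficients `c̄_n = c_n`. Conversely, real coefficients are central and each
`P_n` commutes with conjugation, so conjugating the series termwise gives `f(x̄)`.
-/

open Filter Topology Finset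

theorem eq_of_forall_hasSum_pow_smul {𝕜 E : Type*} [NontriviallyNormedField 𝕜]
    [NormedAddCommGroup E] [NormedSpace 𝕜 E] {a b : ℕ → E} {f : 𝕜 → E}
    (ha : ∀ᶠ t in 𝓝 0, HasSum (fun n => t ^ n • a n) (f t))
    (hb : ∀ᶠ t in 𝓝 0, HasSum (fun n => t ^ n • b n) (f t)) : a = b := by
  let series (a : ℕ → E) : FormalMultilinearSeries 𝕜 𝕜 E :=
    fun n => ContinuousMultilinearMap.mkPiRing 𝕜 (Fin n) (a n)
  have hcoeff (a : ℕ → E) (n : ℕ) : (series a).coeff n = a n := by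
    simp [series, FormalMultilinearSeries.coeff]
  have hseries {a : ℕ → E} (ha : ∀ᶠ t in 𝓝 0, HasSum (fun n => t ^ n • a n) (f t)) :
      HasFPowerSeriesAt f (series a) 0 :=
    hasFPowerSeriesAt_iff.2 (by simpa only [hcoeff, zero_add] using ha)
  funext n
  rw [← hcoeff a, ← hcoeff b, (hseries ha).eq_formalMultilinearSeries (hseries hb)]

theorem Quaternion.star_eq_self_iff_imI_imJ_imK_eq_zero {R : Type*} [CommRing R]
    [NoZeroDivisors R] [CharZero R] {a : ℍ[R]} :
    star a = a ↔ a.imI = 0 ∧ a.imJ = 0 ∧ a.imK = 0 := by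
  rw [star_eq_self, Quaternion.ext_iff]
  simp

theorem sum_range_neg_one_pow_mul_sub_add_one (m : ℕ) :
    ∑ j ∈ range (m + 1), (-1 : ℝ) ^ j * ((m : ℝ) - j + 1) = (m / 2 + 1 : ℕ) := by
  induction m using Nat.twoStepInduction with
  | zero => simp
  | one => norm_num [sum_range_succ]
  | more m ih _ =>
    have hshift : ∀ j ∈ range (m + 1), (-1 : ℝ) ^ (j + 1 + 1) *
        (((m + 2 : ℕ) : ℝ) - ((j + 1 + 1 : ℕ) : ℝ) + 1) = (-1) ^ j * ((m : ℝ) - j + 1) :=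
      fun j _ => by push_cast; ring
    rw [sum_range_succ', sum_range_succ', sum_congr rfl hshift, ih, Nat.add_div_right m two_pos]
    push_cast
    ring

theorem sum_appellT (m : ℕ) : ∑ j ∈ range (m + 1), appellT m j = 1 := by
  let g : ℕ → ℝ := fun j => ((m : ℝ) - j + 1) * ((m : ℝ) - j + 2)
  simp only [appellT, ← sum_div]
  rw [div_eq_one_iff_eq (by positivity)]
  calc ∑ j ∈ range (m + 1), 2 * ((m : ℝ) - j + 1)
      = ∑ j ∈ range (m + 1), (g j - g (j + 1)) := sum_congr rfl fun j _ => by push_cast [g]; ring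
    _ = g 0 - g (m + 1) := sum_range_sub' g (m + 1)
    _ = ((m : ℝ) + 1) * ((m : ℝ) + 2) := by push_cast [g]; ring

theorem appellc_eq (m : ℕ) :
    appellc m = 2 * (m / 2 + 1 : ℕ) / (((m : ℝ) + 1) * ((m : ℝ) + 2)) := by
  rw [appellc, ← sum_range_neg_one_pow_mul_sub_add_one, mul_sum, sum_div]
  refine sum_congr rfl fun j _ => ?_
  rw [appellT]
  ring

theorem appellc_pos (m : ℕ) : 0 < appellc m := by
  rw [appellc_eq]
  positivity

theorem appellQ_coe (m : ℕ) (t : ℝ) : appellQ m t = ↑(t ^ m) := by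
  have hterm : ∀ j ∈ range (m + 1),
      appellT m j • ((t : ℍ[ℝ]) ^ (m - j) * star (t : ℍ[ℝ]) ^ j) = appellT m j • ↑(t ^ m) := by
    intro j hj
    rw [star_coe, ← pow_add, Nat.sub_add_cancel (mem_range_succ_iff.mp hj), Quaternion.coe_pow]
  rw [appellQ, sum_congr rfl hterm, ← sum_smul, sum_appellT, one_smul]

theorem appellP_coe_mul (m : ℕ) (t : ℝ) (a : ℍ[ℝ]) :
    appellP m t * a = t ^ m • (appellc m)⁻¹ • a := by
  rw [appellP, appellQ_coe, smul_mul_assoc, coe_mul_eq_smul, smul_comm]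

theorem star_appellQ (m : ℕ) (x : ℍ[ℝ]) : star (appellQ m x) = appellQ m (star x) := by
  simp only [appellQ, star_sum, Quaternion.star_smul, star_mul, star_pow, star_star]
  refine sum_congr rfl fun j _ => ?_
  rw [((star_comm_self (x := x)).symm.pow_pow j (m - j)).eq]

theorem star_appellP (m : ℕ) (x : ℍ[ℝ]) : star (appellP m x) = appellP m (star x) := by
  rw [appellP, appellP, Quaternion.star_smul, star_appellQ]

theorem star_appellP_mul_of_star_eq_self {a : ℍ[ℝ]} (ha : star a = a) (m : ℕ) (x : ℍ[ℝ]) :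
    star (appellP m x * a) = appellP m (star x) * a := by
  rw [star_mul, ha, star_appellP, star_eq_self.mp ha, coe_commutes]

/-- A convergent series `f(x) = Σ_n P_n(x) c_n` on a ball around the origin is
quaternionic intrinsic (`f(x̄) = conj(f(x))`) if and only if all its coefficients
are real. -/
theorem appellP_series_intrinsic_iff_real_coeffs (c : ℕ → ℍ[ℝ]) (ε : ℝ) (hε : 0 < ε)
    (hconv : ∀ x : ℍ[ℝ], ‖x‖ < ε → Summable fun n => appellP n x * c n) :
    (∀ x : ℍ[ℝ], ‖x‖ < ε →
        (∑' n, appellP n (star x) * c n) = star (∑' n, appellP n x * c n)) ↔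
    (∀ n, (c n).imI = 0 ∧ (c n).imJ = 0 ∧ (c n).imK = 0) := by
  simp only [← star_eq_self_iff_imI_imJ_imK_eq_zero]
  refine ⟨fun h => ?_, fun h x _ => ?_⟩
  · have hball : ∀ᶠ t : ℝ in 𝓝 0, ‖(t : ℍ[ℝ])‖ < ε := by
      filter_upwards [Metric.ball_mem_nhds (0 : ℝ) hε] with t ht
      simpa using ht
    have hcoeff : (fun n => (appellc n)⁻¹ • c n) = fun n => (appellc n)⁻¹ • star (c n) := by
      refine eq_of_forall_hasSum_pow_smul (f := fun t : ℝ => ∑' n, appellP n t * c n) ?_ ?_ <;>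
        filter_upwards [hball] with t ht
      · simpa only [appellP_coe_mul] using (hconv t ht).hasSum
      · have hstar := (hconv t ht).hasSum.star
        rw [← h t ht, star_coe] at hstar
        simpa [appellP_coe_mul, Quaternion.star_smul] using hstar
    intro n
    exact (smul_right_injective _ (inv_ne_zero (appellc_pos n).ne') (congrFun hcoeff n)).symm
  · rw [tsum_star]
    exact tsum_congr fun n => (star_appellP_mul_of_star_eq_self (h n) n x).symm
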